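/- arXiv:1412.2333 — 3 statements merged into one kernel-verified Lean document; each statement's English description precedes it below -/
import Mathlib

section
/- Let G = (V, E) be a finite graph, Ê ⊆ E, and suppose Ê intersects every cut of G of size ≥ n (where n = |V|). Then the component graph of G induced by Ê has fewer than 2n edges. -/
/-- The set of edges of `G` crossing the cut `(S, V \ S)`. -/
def cutEdges {V : Type*} (G : SimpleGraph V) (S : Set V) : Set (Sym2 V) :=
  {e | e ∈ G.edgeSet ∧ ∃ u v, e = s(u, v) ∧ u ∈ S ∧ v ∉ S}

/-- The component graph of `G` induced by a subgraph `Ĝ`: vertices are connected components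
of `Ĝ`, with an edge between two distinct components whenever some edge of `G` joins them. -/
def compGraph {V : Type*} (G Ghat : SimpleGraph V) : SimpleGraph Ghat.ConnectedComponent where
  Adj C D := C ≠ D ∧ ∃ u v, G.Adj u v ∧
    Ghat.connectedComponentMk u = C ∧ Ghat.connectedComponentMk v = D
  symm := by
    constructor
    rintro C D ⟨hne, u, v, h, hu, hv⟩
    exact ⟨hne.symm, v, u, h.symm, hv, hu⟩
  loopless := by constructor; rintro C ⟨hne, -⟩; exact hne rfl
/-!
Averaging over all vertex sets `S`, every edge crosses exactly half of the cuts `(S, V \ S)`, so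
some cut of a finite graph contains at least half of its edges. Pulled back along the quotient map
`V → components of Ê`, a cut of the component graph becomes a cut of `G` that `Ê` cannot meet,
hence one with fewer than `n` edges; and it is at least as large as the cut it came from.
-/

open Finset

lemma mem_cutEdges_iff {W : Type*} {H : SimpleGraph W} {S : Set W} {u v : W} :
    s(u, v) ∈ cutEdges H S ↔ H.Adj u v ∧ (u ∈ S ↔ v ∉ S) := by
  constructor
  · rintro ⟨huv, a, b, hab, ha, hb⟩
    rcases Sym2.eq_iff.mp hab with ⟨rfl, rfl⟩ | ⟨rfl, rfl⟩
    · exact ⟨huv, by tauto⟩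
    · exact ⟨huv, by tauto⟩
  · rintro ⟨huv, hS⟩
    by_cases hu : u ∈ S
    · exact ⟨huv, u, v, rfl, hu, hS.mp hu⟩
    · exact ⟨huv, v, u, Sym2.eq_swap, by tauto, hu⟩

open Classical in
lemma two_mul_card_filter_mem_cutEdges {W : Type*} [Fintype W] {H : SimpleGraph W}
    {u v : W} (huv : H.Adj u v) :
    2 * #{S : Set W | s(u, v) ∈ cutEdges H S} = 2 ^ Fintype.card W := by
  -- toggling `u` swaps the sets that separate `u` from `v` with those that do not
  have htoggle : ∀ S : Set W,
      s(u, v) ∈ cutEdges H (symmDiff S {u}) ↔ s(u, v) ∉ cutEdges H S := by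
    intro S
    simp only [mem_cutEdges_iff, Set.mem_symmDiff, Set.mem_singleton_iff, huv.ne.symm]
    tauto
  have hswap : #{S : Set W | s(u, v) ∈ cutEdges H S}
      = #{S : Set W | s(u, v) ∉ cutEdges H S} := by
    refine card_nbij' (symmDiff · {u}) (symmDiff · {u}) ?_ ?_ ?_ ?_
    · intro S hS
      simpa [htoggle] using hS
    · intro S hS
      simpa [htoggle] using hS
    · intro S _
      exact symmDiff_symmDiff_cancel_right _ _
    · intro S _
      exact symmDiff_symmDiff_cancel_right _ _
  rw [two_mul]
  nth_rw 2 [hswap]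
  rw [card_filter_add_card_filter_not, card_univ, Fintype.card_set]

open Classical in
lemma sum_two_mul_ncard_cutEdges {W : Type*} [Fintype W] (H : SimpleGraph W) :
    ∑ S : Set W, 2 * (cutEdges H S).ncard = 2 ^ Fintype.card W * H.edgeSet.ncard := by
  have hcut : ∀ S : Set W,
      (cutEdges H S).ncard = #(H.edgeFinset.bipartiteAbove (fun S e ↦ e ∈ cutEdges H S) S) := by
    intro S
    rw [bipartiteAbove, ← Set.ncard_coe_finset, coe_filter]
    congr 1
    ext e
    simp only [SimpleGraph.mem_edgeFinset]
    exact ⟨fun h ↦ ⟨h.1, h⟩, And.right⟩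
  have hedge : ∀ e ∈ H.edgeFinset,
      2 * #(univ.bipartiteBelow (fun S e ↦ e ∈ cutEdges H S) e) = 2 ^ Fintype.card W := by
    intro e he
    induction e with
    | h u v => exact two_mul_card_filter_mem_cutEdges (SimpleGraph.mem_edgeFinset.mp he)
  simp_rw [hcut, ← mul_sum, sum_card_bipartiteAbove_eq_sum_card_bipartiteBelow,
    mul_sum, sum_congr rfl hedge, sum_const, smul_eq_mul, mul_comm,
    ← SimpleGraph.coe_edgeFinset, Set.ncard_coe_finset]

theorem exists_edgeSet_ncard_le_two_mul_ncard_cutEdges {W : Type*} [Finite W]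
    (H : SimpleGraph W) : ∃ S : Set W, H.edgeSet.ncard ≤ 2 * (cutEdges H S).ncard := by
  have := Fintype.ofFinite W
  obtain ⟨S, -, hS⟩ := exists_le_of_sum_le univ_nonempty
    (f := fun _ ↦ H.edgeSet.ncard) (g := fun S ↦ 2 * (cutEdges H S).ncard) <| by
    rw [sum_two_mul_ncard_cutEdges, sum_const, card_univ, Fintype.card_set,
      smul_eq_mul]
  exact ⟨S, hS⟩

section ComponentGraph

variable {V : Type*} (G Ghat : SimpleGraph V) (T : Set Ghat.ConnectedComponent)

lemma disjoint_cutEdges_preimage_connectedComponentMk :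
    Disjoint (cutEdges G (Ghat.connectedComponentMk ⁻¹' T)) Ghat.edgeSet := by
  rw [Set.disjoint_left]
  rintro _ ⟨-, u, v, rfl, hu, hv⟩ huv
  have hsame := SimpleGraph.ConnectedComponent.sound (Ghat.mem_edgeSet.mp huv).reachable
  exact hv (hsame ▸ hu : Ghat.connectedComponentMk v ∈ T)

lemma ncard_cutEdges_compGraph_le [Finite V] :
    (cutEdges (compGraph G Ghat) T).ncard ≤
      (cutEdges G (Ghat.connectedComponentMk ⁻¹' T)).ncard := by
  have hsub : cutEdges (compGraph G Ghat) T
      ⊆ Sym2.map Ghat.connectedComponentMk '' cutEdges G (Ghat.connectedComponentMk ⁻¹' T) := by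
    rintro _ ⟨hCD, C, D, rfl, hC, hD⟩
    obtain ⟨-, u, v, huv, rfl, rfl⟩ := hCD
    exact ⟨s(u, v), ⟨huv, u, v, rfl, hC, hD⟩, rfl⟩
  exact (Set.ncard_le_ncard hsub (Set.toFinite _)).trans
    (Set.ncard_image_le (Set.toFinite _))

end ComponentGraph

theorem compGraph_edges_lt_general {V : Type*} [Fintype V] (G Ghat : SimpleGraph V)
    (hhit : ∀ S : Set V, Fintype.card V ≤ (cutEdges G S).ncard →
      (cutEdges G S ∩ Ghat.edgeSet).Nonempty) :
    (compGraph G Ghat).edgeSet.ncard < 2 * Fintype.card V := by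
  obtain ⟨T, hT⟩ := exists_edgeSet_ncard_le_two_mul_ncard_cutEdges (compGraph G Ghat)
  have hlift : (cutEdges G (Ghat.connectedComponentMk ⁻¹' T)).ncard < Fintype.card V := by
    by_contra! hlarge
    exact Set.not_disjoint_iff_nonempty_inter.mpr (hhit _ hlarge)
      (disjoint_cutEdges_preimage_connectedComponentMk G Ghat T)
  have := ncard_cutEdges_compGraph_le G Ghat T
  omega

/-- If the sampled edge set `Ê ⊆ E` intersects every cut of `G` of size at least `n = |V|`,
then the component graph induced by `Ê` has fewer than `2n` edges. -/
theorem compGraph_edges_lt {V : Type*} [Fintype V] (G Ghat : SimpleGraph V) (hle : Ghat ≤ G)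
    (hhit : ∀ S : Set V, Fintype.card V ≤ (cutEdges G S).ncard →
      (cutEdges G S ∩ Ghat.edgeSet).Nonempty) :
    (compGraph G Ghat).edgeSet.ncard < 2 * Fintype.card V :=
  compGraph_edges_lt_general G Ghat hhit
end

section
/- Let G = (V, E) be a finite graph and let T₁, T₂, T₃ be edge sets such that: T₁ is a spanning forest of G; T₂ is a spanning forest of the component graph G₁ = cg[G, T₁] (lifted back to edges of G realizing component-graph edges); and T₃ is a maximal spanning forest of the component graph G₂ = cg[G, T₁ ∪ T₂]. Then T₁ ∪ T₂ ∪ T₃ (lifted to G) is a maximal spanning forest of G, i.e., the number of its trees equals the number of connected components of G. -/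
/-!
Let `T = T₁ ⊔ T₂`, `S = T₃`, and write `[x]` for the `T`-component of `x`. A cycle of `T ⊔ S`
either avoids `S`, and then lies in the forest `T`, or it does not. In the latter case,
contracting its `T`-edges and sending each `S`-edge `uv` to the edge `[u][v]` of the forest `F`
gives a closed walk in `F` of positive length; it repeats no edge because distinct `S`-edges
have distinct images, so it contains a cycle of `F`.

For the count, every edge `uv` of `G` has `[u] = [v]` or `[u][v]` in the component graph, so
`G`-reachable vertices have reachable components there, hence in `F`, and the `S`-edges
witnessing a path of `F` join its components into a walk of `T ⊔ S`. Thus `T ⊔ S` and `G`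
have the same reachability relation.
-/

namespace SimpleGraph

variable {V : Type*} {T S : SimpleGraph V} {F : SimpleGraph T.ConnectedComponent}

section Collapse

variable (hlift : ∀ u v, S.Adj u v →
  F.Adj (T.connectedComponentMk u) (T.connectedComponentMk v))

open Classical in
noncomputable def Walk.collapse :
    ∀ {u v : V}, (T ⊔ S).Walk u v →
      F.Walk (T.connectedComponentMk u) (T.connectedComponentMk v)
  | _, _, .nil => .nil
  | u, _, .cons (v := w) h p =>
    if hT : T.Adj u w then
      (p.collapse).copy (ConnectedComponent.sound hT.reachable).symm rfl
    else
      .cons (hlift u w (h.resolve_left hT)) p.collapse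

theorem Walk.mem_edges_collapse {u v : V} {p : (T ⊔ S).Walk u v}
    {e : Sym2 T.ConnectedComponent}
    (he : e ∈ (p.collapse hlift).edges) :
    ∃ a b, S.Adj a b ∧ s(a, b) ∈ p.edges ∧
      e = s(T.connectedComponentMk a, T.connectedComponentMk b) := by
  induction p with
  | nil => simp [collapse] at he
  | @cons u w v h p ih =>
    rw [collapse] at he
    split_ifs at he with hT
    · rw [edges_copy] at he
      obtain ⟨a, b, hab, hp, rfl⟩ := ih he
      exact ⟨a, b, hab, List.mem_cons_of_mem _ hp, rfl⟩
    · rcases List.mem_cons.mp he with rfl | he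
      · exact ⟨u, w, h.resolve_left hT, List.mem_cons_self, rfl⟩
      · obtain ⟨a, b, hab, hp, rfl⟩ := ih he
        exact ⟨a, b, hab, List.mem_cons_of_mem _ hp, rfl⟩

theorem Walk.IsTrail.collapse
    (hinj : ∀ u v u' v', S.Adj u v → S.Adj u' v' →
      T.connectedComponentMk u = T.connectedComponentMk u' →
      T.connectedComponentMk v = T.connectedComponentMk v' → u = u' ∧ v = v')
    {u v : V} {p : (T ⊔ S).Walk u v} (hp : p.IsTrail) : (p.collapse hlift).IsTrail := by
  induction p with
  | nil => simp [Walk.collapse]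
  | @cons u w v h p ih =>
    rw [isTrail_cons] at hp
    rw [Walk.collapse]
    split_ifs with hT
    · exact (isTrail_copy _ _ _).mpr (ih hp.1)
    · refine (isTrail_cons _ _).mpr ⟨ih hp.1, fun hmem => hp.2 ?_⟩
      obtain ⟨a, b, hab, hp', he⟩ := mem_edges_collapse hlift hmem
      rcases Sym2.eq_iff.mp he with ⟨hu, hw⟩ | ⟨hu, hw⟩
      · obtain ⟨rfl, rfl⟩ := hinj u w a b (h.resolve_left hT) hab hu hw
        exact hp'
      · obtain ⟨rfl, rfl⟩ := hinj u w b a (h.resolve_left hT) hab.symm hu hw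
        rwa [Sym2.eq_swap]

theorem Walk.not_nil_collapse {u v : V} (p : (T ⊔ S).Walk u v) {e : Sym2 V}
    (he : e ∈ p.edges) (heS : e ∈ S.edgeSet) : ¬ (p.collapse hlift).Nil := by
  induction p with
  | nil => simp at he
  | @cons u w v h p ih =>
    rw [Walk.collapse]
    split_ifs with hT
    · rw [nil_copy]
      rcases List.mem_cons.mp he with rfl | he
      · -- an `S`-edge joins distinct `T`-components, so it is not a `T`-edge
        exact absurd (ConnectedComponent.sound hT.reachable) (hlift u w heS).ne
      · exact ih he
    · exact not_nil_cons

end Collapse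

theorem IsAcyclic.sup_of_lift (hT : T.IsAcyclic) (hF : F.IsAcyclic)
    (hlift : ∀ u v, S.Adj u v → F.Adj (T.connectedComponentMk u) (T.connectedComponentMk v))
    (hinj : ∀ u v u' v', S.Adj u v → S.Adj u' v' →
      T.connectedComponentMk u = T.connectedComponentMk u' →
      T.connectedComponentMk v = T.connectedComponentMk v' → u = u' ∧ v = v') :
    (T ⊔ S).IsAcyclic := by
  intro u c hc
  by_cases hS : ∃ e ∈ c.edges, e ∈ S.edgeSet
  · obtain ⟨e, he, heS⟩ := hS
    have hcirc : (c.collapse hlift).IsCircuit :=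
      ⟨hc.isTrail.collapse hlift hinj,
        fun h => c.not_nil_collapse hlift he heS (Walk.eq_nil_iff_nil.mp h)⟩
    classical
    exact hF _ hcirc.isCycle_cycleBypass
  · push Not at hS
    have hTedges : ∀ e ∈ c.edges, e ∈ T.edgeSet := fun e he =>
      (edgeSet_sup T S ▸ c.edges_subset_edgeSet he).resolve_right (hS e he)
    exact hT _ (hc.transfer hTedges)

theorem Reachable.compGraph_mk {G : SimpleGraph V} {u v : V} (h : G.Reachable u v) :
    (compGraph G T).Reachable (T.connectedComponentMk u) (T.connectedComponentMk v) := by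
  rw [reachable_iff_reflTransGen] at h ⊢
  refine h.lift' _ fun a b hab => ?_
  by_cases hab' : T.connectedComponentMk a = T.connectedComponentMk b
  · rw [Function.onFun, hab']
  · exact .single ⟨hab', a, b, hab, rfl, rfl⟩

theorem Reachable.sup_of_reachable_mk
    (hwit : ∀ C D, F.Adj C D → ∃ u v, S.Adj u v ∧
      T.connectedComponentMk u = C ∧ T.connectedComponentMk v = D)
    {u v : V} (h : F.Reachable (T.connectedComponentMk u) (T.connectedComponentMk v)) :
    (T ⊔ S).Reachable u v := by
  let φ := ConnectedComponent.map (Hom.ofLE (le_sup_left : T ≤ T ⊔ S))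
  have hadj : ∀ C D, F.Adj C D → φ C = φ D := by
    intro C D hCD
    obtain ⟨a, b, hab, rfl, rfl⟩ := hwit C D hCD
    exact ConnectedComponent.sound (sup_adj .. |>.mpr (Or.inr hab)).reachable
  have hreach : ∀ {C D}, F.Reachable C D → φ C = φ D := by
    rintro C D ⟨w⟩
    induction w with
    | nil => rfl
    | cons h _ ih => exact (hadj _ _ h).trans ih
  exact ConnectedComponent.exact (hreach h)

end SimpleGraph

open SimpleGraph

theorem three_phase_maximal_spanning_forest_general {V : Type*}
    (G T₁ T₂ T₃ : SimpleGraph V)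
    (h1 : T₁ ≤ G) (h2 : T₂ ≤ G) (h3 : T₃ ≤ G)
    (hac12 : (T₁ ⊔ T₂).IsAcyclic)
    (F : SimpleGraph (T₁ ⊔ T₂).ConnectedComponent)
    (hFac : F.IsAcyclic)
    (hFmax : ∀ C D, (compGraph G (T₁ ⊔ T₂)).Reachable C D → F.Reachable C D)
    (hlift : ∀ u v, T₃.Adj u v →
      F.Adj ((T₁ ⊔ T₂).connectedComponentMk u) ((T₁ ⊔ T₂).connectedComponentMk v))
    (hwit : ∀ C D, F.Adj C D → ∃ u v, T₃.Adj u v ∧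
      (T₁ ⊔ T₂).connectedComponentMk u = C ∧ (T₁ ⊔ T₂).connectedComponentMk v = D)
    (hone : ∀ u v u' v', T₃.Adj u v → T₃.Adj u' v' →
      (T₁ ⊔ T₂).connectedComponentMk u = (T₁ ⊔ T₂).connectedComponentMk u' →
      (T₁ ⊔ T₂).connectedComponentMk v = (T₁ ⊔ T₂).connectedComponentMk v' →
      u = u' ∧ v = v') :
    (T₁ ⊔ T₂ ⊔ T₃).IsAcyclic ∧
      Nat.card (T₁ ⊔ T₂ ⊔ T₃).ConnectedComponent = Nat.card G.ConnectedComponent := by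
  have hreach : ∀ u v, (T₁ ⊔ T₂ ⊔ T₃).Reachable u v ↔ G.Reachable u v := fun u v =>
    ⟨fun h => h.mono (sup_le (sup_le h1 h2) h3),
      fun h => .sup_of_reachable_mk hwit (hFmax _ _ h.compGraph_mk)⟩
  exact ⟨hac12.sup_of_lift hFac hlift hone, Nat.card_congr (Quot.congrRight hreach)⟩

/-- If `T₁` is a spanning forest of `G`, `T₂` is (a lift of) a spanning forest of the component
graph `cg[G, T₁]`, and `T₃` is (a lift of) a maximal spanning forest of the component graph
`cg[G, T₁ ∪ T₂]`, then `T₁ ∪ T₂ ∪ T₃` is a maximal spanning forest of `G`: it is a forest and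
its number of trees (connected components) equals the number of connected components of `G`. -/
theorem three_phase_maximal_spanning_forest {V : Type*} [Fintype V]
    (G T₁ T₂ T₃ : SimpleGraph V)
    (h1 : T₁ ≤ G) (h2 : T₂ ≤ G) (h3 : T₃ ≤ G)
    (hac1 : T₁.IsAcyclic) (hac12 : (T₁ ⊔ T₂).IsAcyclic)
    (h2cross : ∀ u v, T₂.Adj u v →
      T₁.connectedComponentMk u ≠ T₁.connectedComponentMk v)
    (F : SimpleGraph (T₁ ⊔ T₂).ConnectedComponent)
    (hF : F ≤ compGraph G (T₁ ⊔ T₂))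
    (hFac : F.IsAcyclic)
    (hFmax : ∀ C D, (compGraph G (T₁ ⊔ T₂)).Reachable C D → F.Reachable C D)
    (hlift : ∀ u v, T₃.Adj u v →
      F.Adj ((T₁ ⊔ T₂).connectedComponentMk u) ((T₁ ⊔ T₂).connectedComponentMk v))
    (hwit : ∀ C D, F.Adj C D → ∃ u v, T₃.Adj u v ∧
      (T₁ ⊔ T₂).connectedComponentMk u = C ∧ (T₁ ⊔ T₂).connectedComponentMk v = D)
    (hone : ∀ u v u' v', T₃.Adj u v → T₃.Adj u' v' →
      (T₁ ⊔ T₂).connectedComponentMk u = (T₁ ⊔ T₂).connectedComponentMk u' →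
      (T₁ ⊔ T₂).connectedComponentMk v = (T₁ ⊔ T₂).connectedComponentMk v' →
      u = u' ∧ v = v') :
    (T₁ ⊔ T₂ ⊔ T₃).IsAcyclic ∧
      Nat.card (T₁ ⊔ T₂ ⊔ T₃).ConnectedComponent = Nat.card G.ConnectedComponent :=
  three_phase_maximal_spanning_forest_general G T₁ T₂ T₃ h1 h2 h3 hac12 F hFac hFmax hlift hwit hone
end

section
/- Let F be a forest in an edge-weighted graph G with distinct edge weights, and define an edge {u, v} of G to be F-heavy if F contains a path from u to v whose maximum edge weight is strictly less than wt(u, v), and F-light otherwise. Then no F-heavy edge belongs to the minimum spanning tree (minimum spanning forest) of G. -/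
/-!
Deleting `{u, v}` from the tree `T` splits it into the part reachable from `u` and the part
reachable from `v`. The `F`-path from `u` to `v` must cross between the two parts along some edge
`{a, b}`, which is lighter than `{u, v}`; reconnecting the parts through `{a, b}` gives a spanning
tree of `G` that is strictly lighter than `T`.
-/

/-- Total weight of (the edge set of) a graph. -/
noncomputable def wsum {V : Type*} (wt : Sym2 V → ℝ) (X : SimpleGraph V) : ℝ :=
  ∑ᶠ e ∈ X.edgeSet, wt e

namespace SimpleGraph

variable {V : Type*}

theorem Reachable.deleteEdges_or {G : SimpleGraph V} {u v x : V} (h : G.Reachable u x) :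
    (G.deleteEdges {s(u, v)}).Reachable u x ∨ (G.deleteEdges {s(u, v)}).Reachable v x := by
  rw [reachable_iff_reflTransGen] at h
  induction h with
  | refl => exact .inl .rfl
  | @tail y z _ hyz ih =>
    by_cases he : s(y, z) = s(u, v)
    · rcases Sym2.eq_iff.mp he with ⟨-, rfl⟩ | ⟨-, rfl⟩
      · exact .inr .rfl
      · exact .inl .rfl
    · have hyz' : (G.deleteEdges {s(u, v)}).Adj y z := by simpa [deleteEdges_adj, hyz] using he
      exact ih.imp (·.trans hyz'.reachable) (·.trans hyz'.reachable)

theorem IsTree.deleteEdges_sup_edge {T : SimpleGraph V} (hT : T.IsTree) {u v a b : V}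
    (ha : (T.deleteEdges {s(u, v)}).Reachable u a)
    (hb : ¬ (T.deleteEdges {s(u, v)}).Reachable u b) :
    (T.deleteEdges {s(u, v)} ⊔ edge a b).IsTree := by
  set T₀ := T.deleteEdges {s(u, v)}
  have hvb : T₀.Reachable v b := ((hT.connected.preconnected u b).deleteEdges_or).resolve_left hb
  have hT₀ : T₀ ≤ T₀ ⊔ edge a b := le_sup_left
  have hab : (T₀ ⊔ edge a b).Adj a b :=
    Or.inr ((edge_adj ..).mpr ⟨Or.inl ⟨rfl, rfl⟩, fun h => hb (h ▸ ha)⟩)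
  have huv : (T₀ ⊔ edge a b).Reachable u v :=
    ((ha.mono hT₀).trans hab.reachable).trans (hvb.mono hT₀).symm
  refine ⟨(connected_iff_exists_forall_reachable _).mpr ⟨u, fun x => ?_⟩, ?_⟩
  · rcases (hT.connected.preconnected u x).deleteEdges_or (v := v) with hx | hx
    · exact hx.mono hT₀
    · exact huv.trans (hx.mono hT₀)
  · exact (hT.isAcyclic.anti (deleteEdges_le _)).sup_edge_of_not_reachable
      fun hab => hb (ha.trans hab)

end SimpleGraph

open SimpleGraph

section Weight

variable {V : Type*} [Finite V] (wt : Sym2 V → ℝ)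

theorem wsum_sup_edge {G : SimpleGraph V} {a b : V} (hab : a ≠ b) (h : ¬ G.Adj a b) :
    wsum wt (G ⊔ edge a b) = wsum wt G + wt s(a, b) := by
  rw [wsum, edgeSet_sup, edgeSet_edge_of_ne hab, Set.union_singleton,
    finsum_mem_insert _ (G.mem_edgeSet.not.mpr h) (Set.toFinite _), add_comm, wsum]

theorem wsum_deleteEdges_singleton {G : SimpleGraph V} {e : Sym2 V} (he : e ∈ G.edgeSet) :
    wsum wt G = wsum wt (G.deleteEdges {e}) + wt e := by
  rw [wsum, wsum, edgeSet_deleteEdges, ← Set.insert_sdiff_self_of_mem he,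
    finsum_mem_insert _ (fun h => h.2 rfl) (Set.toFinite _), Set.insert_sdiff_self_of_mem he,
    add_comm]

end Weight

theorem heavy_edge_not_in_mst_general {V : Type*} [Fintype V] (G F T : SimpleGraph V)
    (wt : Sym2 V → ℝ)
    (hF : F ≤ G)
    (hT : T ≤ G) (hTc : T.Connected) (hTac : T.IsAcyclic)
    (hTmin : ∀ T' : SimpleGraph V, T' ≤ G → T'.Connected → T'.IsAcyclic →
      wsum wt T ≤ wsum wt T')
    (u v : V)
    (p : F.Walk u v) (hheavy : ∀ e ∈ p.edges, wt e < wt s(u, v)) :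
    ¬ T.Adj u v := by
  intro huv
  set T₀ := T.deleteEdges {s(u, v)}
  have hv : ¬ T₀.Reachable u v := isBridge_iff.mp (isAcyclic_iff_forall_adj_isBridge.mp hTac huv)
  obtain ⟨d, hd, ha, hb⟩ := p.exists_boundary_dart {x | T₀.Reachable u x} .rfl hv
  obtain ⟨⟨a, b⟩, hab⟩ := d
  have hlt : wt s(a, b) < wt s(u, v) := hheavy _ (p.edges_eq_map_darts ▸ List.mem_map_of_mem hd)
  obtain ⟨hT'c, hT'ac⟩ := IsTree.deleteEdges_sup_edge ⟨hTc, hTac⟩ ha hb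
  have hT'G : T₀ ⊔ edge a b ≤ G :=
    sup_le ((deleteEdges_le _).trans hT) ((edge_le_iff G).mpr (.inr (hF hab)))
  have hle := hTmin _ hT'G hT'c hT'ac
  rw [wsum_deleteEdges_singleton wt (T.mem_edgeSet.mpr huv),
    wsum_sup_edge wt hab.ne fun h => hb (Reachable.trans ha h.reachable)] at hle
  linarith

/-- Cycle-property consequence: if `F` is a forest in a weighted graph `G` with distinct edge
weights and the edge `{u, v}` is `F`-heavy — i.e. `F` contains a path from `u` to `v` all of
whose edges are strictly lighter than `{u, v}` — then `{u, v}` is not in the minimum spanning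
tree `T` of `G`. -/
theorem heavy_edge_not_in_mst {V : Type*} [Fintype V] (G F T : SimpleGraph V)
    (wt : Sym2 V → ℝ)
    (hinj : ∀ e₁ ∈ G.edgeSet, ∀ e₂ ∈ G.edgeSet, wt e₁ = wt e₂ → e₁ = e₂)
    (hGc : G.Connected)
    (hF : F ≤ G) (hFac : F.IsAcyclic)
    (hT : T ≤ G) (hTc : T.Connected) (hTac : T.IsAcyclic)
    (hTmin : ∀ T' : SimpleGraph V, T' ≤ G → T'.Connected → T'.IsAcyclic →
      wsum wt T ≤ wsum wt T')
    (u v : V) (hadj : G.Adj u v)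
    (p : F.Walk u v) (hheavy : ∀ e ∈ p.edges, wt e < wt s(u, v)) :
    ¬ T.Adj u v :=
  heavy_edge_not_in_mst_general G F T wt hF hT hTc hTac hTmin u v p hheavy
end
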